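/- Fix V > 0 and a Bond number B > 0, set κ := √B and λ*₁ := (4V/π)·[1 − 4I₂(κ)/(κ·I₁(κ))]^{−1}. Then for every h ∈ M_V, the squared fundamental shallow sloshing frequency with one azimuthal nodal line satisfies λ_{1,1}(h) := Ω_{1,1}(h)² ≤ λ*₁. -/

import Mathlib

/-- Modified Bessel function of the first kind of (natural) order `n`,
`I_n(x) = Σ_{k=0}^∞ (x/2)^{2k+n} / (k! Γ(k+n+1))`. -/
noncomputable def besselI (n : ℕ) (x : ℝ) : ℝ :=
  ∑' k : ℕ, (x / 2) ^ (2 * k + n) / ((k.factorial : ℝ) * Real.Gamma (k + n + 1))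

/-- `h ∈ M_V`: continuous, nonnegative on `[0,1]`, with `∫_0^1 h(r) r dr = V/(2π)`. -/
def MemMV (V : ℝ) (h : ℝ → ℝ) : Prop :=
  ContinuousOn h (Set.Icc (0 : ℝ) 1) ∧ (∀ r ∈ Set.Icc (0 : ℝ) 1, 0 ≤ h r) ∧
    (∫ r in (0 : ℝ)..1, h r * r) = V / (2 * Real.pi)

/-- The energy  for sloshing with one azimuthal nodal line. -/
noncomputable def energyR1 (B : ℝ) (h ψ ζ : ℝ → ℝ) : ℝ :=
  (1 / 2) * (∫ r in (0 : ℝ)..1, h r * ((deriv ψ r) ^ 2 + (ψ r) ^ 2 / r ^ 2) * r) +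
    (1 / 2) * (∫ r in (0 : ℝ)..1,
      ((ζ r) ^ 2 + (1 / B) * ((deriv ζ r) ^ 2 + (ζ r) ^ 2 / r ^ 2)) * r)

/-- The fundamental shallow sloshing frequency with one azimuthal nodal line,
. -/
noncomputable def OmegaR1 (B : ℝ) (h : ℝ → ℝ) : ℝ :=
  sInf {E : ℝ | ∃ ψ ζ : ℝ → ℝ, ContDiff ℝ 1 ψ ∧ ContDiff ℝ 1 ζ ∧
    ψ 0 = 0 ∧ ζ 0 = 0 ∧ ζ 1 = 0 ∧
    (∫ r in (0 : ℝ)..1, ψ r * ζ r * r) = 1 ∧ E = energyR1 B h ψ ζ}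

/-!
Test the variational problem with `ψ = a r` and, for this `ψ`, the optimal `ζ ∝ g`, where
`g r = r - I₁(κ r) / I₁(κ)` solves `r² g'' + r g' - (1 + κ² r²) g = -κ² r³` with `g 0 = g 1 = 0`.
Multiplying this equation by `g` and integrating by parts turns the `ζ`-energy of `g` into
`∫₀¹ g r² dr = 1/4 - I₂(κ)/(κ I₁(κ)) =: D`, computed from `(x² I₂)' = x² I₁`; `D > 0` because
`4 I₂(x) < x I₁(x)` coefficientwise. Under the constraint the energy is
`a² V/(2π) + 1/(2 a² D)`, whose minimum over `a` is `√(V/(π D))`; its square is `λ*₁`.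
The Bessel identities come from term-by-term differentiation of the defining series.
-/

open Set Nat

section EntireSeries

variable {c : ℕ → ℝ} {e : ℕ → ℕ} {m : ℕ}

theorem summable_mul_pow_of_le (hc : ∀ R, Summable fun k => |c k| * R ^ k)
    (he : ∀ k, e k ≤ 2 * k + m) (x : ℝ) : Summable fun k => c k * x ^ e k := by
  set M := max |x| 1
  refine .of_norm_bounded ((hc (M ^ 2)).mul_left (M ^ m)) fun k => ?_
  calc ‖c k * x ^ e k‖ = |c k| * |x| ^ e k := by rw [Real.norm_eq_abs, abs_mul, abs_pow]
    _ ≤ |c k| * M ^ (2 * k + m) := by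
      gcongr
      exact (pow_le_pow_left₀ (abs_nonneg x) (le_max_left _ _) _).trans
        (pow_le_pow_right₀ (le_max_right _ _) (he k))
    _ = M ^ m * (|c k| * (M ^ 2) ^ k) := by ring

theorem summable_abs_mul_cast_mul_pow (hc : ∀ R, Summable fun k => |c k| * R ^ k)
    (he : ∀ k, e k ≤ 2 * k + m) (R : ℝ) : Summable fun k => |c k * e k| * R ^ k := by
  refine .of_norm_bounded ((hc (2 * |R|)).mul_left ((m : ℝ) + 2)) fun k => ?_
  have hek : (e k : ℝ) ≤ (m + 2) * 2 ^ k := by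
    have h1 : k < 2 ^ k := Nat.lt_two_pow_self
    have h2 : 1 ≤ 2 ^ k := Nat.one_le_two_pow
    exact_mod_cast (he k).trans (by nlinarith)
  calc ‖|c k * e k| * R ^ k‖ = |c k| * e k * |R| ^ k := by
        rw [Real.norm_eq_abs, abs_mul, abs_abs, abs_mul, Nat.abs_cast, abs_pow]
    _ ≤ |c k| * ((m + 2) * 2 ^ k) * |R| ^ k := by gcongr
    _ = (m + 2) * (|c k| * (2 * |R|) ^ k) := by rw [mul_pow]; ring

theorem hasDerivAt_tsum_mul_pow (hc : ∀ R, Summable fun k => |c k| * R ^ k)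
    (he : ∀ k, e k ≤ 2 * k + m) (x : ℝ) :
    HasDerivAt (fun y => ∑' k, c k * y ^ e k) (∑' k, c k * e k * x ^ (e k - 1)) x := by
  set R := |x| + 1
  have hR : 1 ≤ R := le_add_of_nonneg_left (abs_nonneg x)
  have hx : x ∈ Metric.ball (0 : ℝ) R := by simp [R]
  refine hasDerivAt_tsum_of_isPreconnected (g := fun k y => c k * y ^ e k)
    (g' := fun k y => c k * e k * y ^ (e k - 1))
    ((summable_abs_mul_cast_mul_pow hc he (R ^ 2)).mul_left (R ^ m)) Metric.isOpen_ball
    (convex_ball 0 R).isPreconnected (fun k y _ => ?_) (fun k y hy => ?_) hx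
    (summable_mul_pow_of_le hc he x) hx
  · simpa [mul_assoc] using (hasDerivAt_pow (e k) y).const_mul (c k)
  · have hyR : |y| ≤ R := by simpa using (Metric.mem_ball.1 hy).le
    calc ‖c k * e k * y ^ (e k - 1)‖ = |c k * e k| * |y| ^ (e k - 1) := by
          rw [Real.norm_eq_abs, abs_mul, abs_pow]
      _ ≤ |c k * e k| * R ^ (2 * k + m) := by
        gcongr
        exact (pow_le_pow_left₀ (abs_nonneg y) hyR _).trans
          (pow_le_pow_right₀ hR ((Nat.sub_le _ _).trans (he k)))
      _ = R ^ m * (|c k * e k| * (R ^ 2) ^ k) := by rw [pow_add, pow_mul]; ring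

end EntireSeries

noncomputable def besselICoeff (n k : ℕ) : ℝ := 1 / (2 ^ (2 * k + n) * k ! * (k + n)!)

theorem besselICoeff_pos (n k : ℕ) : 0 < besselICoeff n k := by
  unfold besselICoeff; positivity

theorem besselI_eq_tsum (n : ℕ) (x : ℝ) :
    besselI n x = ∑' k, besselICoeff n k * x ^ (2 * k + n) := by
  refine tsum_congr fun k => ?_
  rw [show (k : ℝ) + n + 1 = ((k + n : ℕ) : ℝ) + 1 by push_cast; ring,
    Real.Gamma_nat_eq_factorial, besselICoeff, div_pow]
  field_simp

theorem summable_abs_besselICoeff_mul_pow (n : ℕ) (R : ℝ) :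
    Summable fun k => |besselICoeff n k| * R ^ k := by
  refine .of_norm_bounded (Real.summable_pow_div_factorial |R|) fun k => ?_
  rw [Real.norm_eq_abs, abs_mul, abs_abs, abs_pow, abs_of_pos (besselICoeff_pos n k),
    div_eq_inv_mul]
  gcongr
  rw [besselICoeff, one_div]
  gcongr
  calc (k ! : ℝ) = 1 * k ! * 1 := by ring
    _ ≤ 2 ^ (2 * k + n) * k ! * (k + n)! := by
      gcongr
      · exact one_le_pow₀ one_le_two
      · exact_mod_cast (k + n).factorial_pos

theorem besselICoeff_succ_left (n k : ℕ) :
    besselICoeff (n + 1) k * (2 * k + 2 * n + 2) = besselICoeff n k := by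
  rw [besselICoeff, besselICoeff, show k + (n + 1) = k + n + 1 by ring, Nat.factorial_succ,
    show 2 * k + (n + 1) = 2 * k + n + 1 by ring, pow_succ]
  push_cast
  field_simp

theorem besselICoeff_succ_right (n k : ℕ) :
    besselICoeff n (k + 1) * (4 * (k + 1) * (k + n + 1)) = besselICoeff n k := by
  rw [besselICoeff, besselICoeff, show k + 1 + n = k + n + 1 by ring, Nat.factorial_succ,
    Nat.factorial_succ, show 2 * (k + 1) + n = 2 * k + n + 2 by ring, pow_add]
  push_cast
  field_simp
  ring

theorem hasDerivAt_besselI (n : ℕ) (x : ℝ) :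
    HasDerivAt (besselI n)
      (∑' k, besselICoeff n k * (2 * k + n : ℕ) * x ^ (2 * k + n - 1)) x := by
  rw [show besselI n = _ from funext (besselI_eq_tsum n)]
  exact hasDerivAt_tsum_mul_pow (summable_abs_besselICoeff_mul_pow n) (fun _ => le_rfl) x

theorem deriv_besselI (n : ℕ) :
    deriv (besselI n) =
      fun x => ∑' k, besselICoeff n k * (2 * k + n : ℕ) * x ^ (2 * k + n - 1) :=
  funext fun x => (hasDerivAt_besselI n x).deriv

theorem hasDerivAt_deriv_besselI (n : ℕ) (x : ℝ) :
    HasDerivAt (deriv (besselI n)) (∑' k, besselICoeff n k * (2 * k + n : ℕ) *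
      (2 * k + n - 1 : ℕ) * x ^ (2 * k + n - 1 - 1)) x := by
  rw [deriv_besselI]
  exact hasDerivAt_tsum_mul_pow (m := n)
    (summable_abs_mul_cast_mul_pow (summable_abs_besselICoeff_mul_pow n) fun _ => le_rfl)
    (fun _ => Nat.sub_le _ _) x

theorem differentiable_besselI (n : ℕ) : Differentiable ℝ (besselI n) :=
  fun x => (hasDerivAt_besselI n x).differentiableAt

theorem differentiable_deriv_besselI (n : ℕ) : Differentiable ℝ (deriv (besselI n)) :=
  fun x => (hasDerivAt_deriv_besselI n x).differentiableAt

theorem contDiff_besselI (n : ℕ) : ContDiff ℝ 1 (besselI n) :=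
  contDiff_one_iff_deriv.2 ⟨differentiable_besselI n, (differentiable_deriv_besselI n).continuous⟩

theorem besselI_succ_zero (n : ℕ) : besselI (n + 1) 0 = 0 := by
  simp [besselI]

theorem besselI_pos (n : ℕ) {x : ℝ} (hx : 0 < x) : 0 < besselI n x := by
  rw [besselI_eq_tsum]
  exact (summable_mul_pow_of_le (summable_abs_besselICoeff_mul_pow n) (fun _ => le_rfl) x).tsum_pos
    (fun k => by have := besselICoeff_pos n k; positivity) 0
    (by have := besselICoeff_pos n 0; positivity)

-- The truncated exponent `e - 1` of a derivative series is harmless: at `e = 0` the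
-- factor `e` vanishes.
theorem cast_mul_pow_pred_mul (e : ℕ) (x : ℝ) : (e : ℝ) * x ^ (e - 1) * x = e * x ^ e := by
  cases e <;> simp [pow_succ, mul_assoc]

theorem cast_mul_cast_pred (e : ℕ) : (e : ℝ) * (e - 1 : ℕ) = e * (e - 1) := by
  cases e <;> simp

theorem hasSum_besselI_euler (n : ℕ) (x : ℝ) :
    HasSum (fun k => besselICoeff n k * (4 * k * (k + n)) * x ^ (2 * k + n))
      (x ^ 2 * deriv (deriv (besselI n)) x + x * deriv (besselI n) x - n ^ 2 * besselI n x) := by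
  have hc := summable_abs_besselICoeff_mul_pow n
  have hc' := summable_abs_mul_cast_mul_pow hc (fun k => le_refl (2 * k + n))
  have h2 : Summable fun k => besselICoeff n k * (2 * k + n : ℕ) * (2 * k + n - 1 : ℕ) *
      x ^ (2 * k + n - 1 - 1) :=
    summable_mul_pow_of_le (summable_abs_mul_cast_mul_pow hc' (m := n) fun _ => Nat.sub_le _ _)
      (fun _ => (Nat.sub_le _ _).trans (Nat.sub_le _ _)) x
  have h1 : Summable fun k => besselICoeff n k * (2 * k + n : ℕ) * x ^ (2 * k + n - 1) :=
    summable_mul_pow_of_le hc' (fun _ => Nat.sub_le _ _) x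
  have h0 : Summable fun k => besselICoeff n k * x ^ (2 * k + n) :=
    summable_mul_pow_of_le hc (fun k => le_refl (2 * k + n)) x
  rw [(hasDerivAt_deriv_besselI n x).deriv, deriv_besselI, besselI_eq_tsum]
  refine (((h2.hasSum.mul_left (x ^ 2)).add (h1.hasSum.mul_left x)).sub
    (h0.hasSum.mul_left ((n : ℝ) ^ 2))).congr_fun fun k => ?_
  set e := 2 * k + n
  symm
  calc x ^ 2 * (besselICoeff n k * e * (e - 1 : ℕ) * x ^ (e - 1 - 1)) +
        x * (besselICoeff n k * e * x ^ (e - 1)) - n ^ 2 * (besselICoeff n k * x ^ e)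
      = besselICoeff n k * (e * (((e - 1 : ℕ) : ℝ) * x ^ (e - 1 - 1) * x) * x +
        e * x ^ (e - 1) * x - n ^ 2 * x ^ e) := by ring
    _ = besselICoeff n k * ((e * (e - 1 : ℕ) + e - n ^ 2) * x ^ e) := by
      rw [cast_mul_pow_pred_mul, mul_left_comm, mul_assoc, cast_mul_pow_pred_mul]; ring
    _ = besselICoeff n k * (4 * k * (k + n)) * x ^ e := by
      rw [cast_mul_cast_pred]; push_cast [e]; ring

theorem besselI_ode (n : ℕ) (x : ℝ) :
    x ^ 2 * deriv (deriv (besselI n)) x + x * deriv (besselI n) x -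
      (x ^ 2 + n ^ 2) * besselI n x = 0 := by
  have hs := hasSum_besselI_euler n x
  have hshift : ∑' k, besselICoeff n k * (4 * k * (k + n)) * x ^ (2 * k + n) =
      x ^ 2 * besselI n x := by
    rw [hs.summable.tsum_eq_zero_add, besselI_eq_tsum, ← tsum_mul_left]
    simp only [CharP.cast_eq_zero, mul_zero, zero_mul, zero_add]
    refine tsum_congr fun k => ?_
    rw [← besselICoeff_succ_right n k]
    push_cast
    ring
  linear_combination hs.tsum_eq.symm.trans hshift

theorem hasDerivAt_pow_mul_besselI_succ (n : ℕ) (x : ℝ) :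
    HasDerivAt (fun y => y ^ (n + 1) * besselI (n + 1) y) (x ^ (n + 1) * besselI n x) x := by
  have hfun : (fun y => y ^ (n + 1) * besselI (n + 1) y) =
      fun y => ∑' k, besselICoeff (n + 1) k * y ^ (2 * k + (2 * n + 2)) := by
    funext y
    rw [besselI_eq_tsum, ← tsum_mul_left]
    exact tsum_congr fun k => by ring
  rw [hfun, besselI_eq_tsum, ← tsum_mul_left]
  convert hasDerivAt_tsum_mul_pow (summable_abs_besselICoeff_mul_pow (n + 1))
    (fun k => le_refl (2 * k + (2 * n + 2))) x using 1
  refine tsum_congr fun k => ?_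
  rw [← besselICoeff_succ_left, show 2 * k + (2 * n + 2) - 1 = 2 * k + n + (n + 1) by omega]
  push_cast
  ring

theorem two_mul_succ_mul_besselI_succ_lt (n : ℕ) {x : ℝ} (hx : 0 < x) :
    2 * (n + 1) * besselI (n + 1) x < x * besselI n x := by
  have hterm : ∀ k : ℕ, x * (besselICoeff n k * x ^ (2 * k + n)) =
      (2 * k + 2 * n + 2) * (besselICoeff (n + 1) k * x ^ (2 * k + (n + 1))) := fun k => by
    rw [← besselICoeff_succ_left]; ring
  have hpos : ∀ k, 0 < besselICoeff (n + 1) k * x ^ (2 * k + (n + 1)) := fun k => by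
    have := besselICoeff_pos (n + 1) k; positivity
  rw [besselI_eq_tsum, besselI_eq_tsum, ← tsum_mul_left, ← tsum_mul_left]
  refine Summable.tsum_lt_tsum (i := 1) (fun k => ?_) ?_
    ((summable_mul_pow_of_le (summable_abs_besselICoeff_mul_pow (n + 1)) (fun _ => le_rfl)
      x).mul_left _)
    ((summable_mul_pow_of_le (summable_abs_besselICoeff_mul_pow n) (fun _ => le_rfl) x).mul_left _)
  · simp only [hterm]
    gcongr
    · exact (hpos k).le
    · linarith [k.cast_nonneg (α := ℝ)]
  · simp only [hterm]
    gcongr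
    · exact hpos 1
    · push_cast; linarith

theorem besselI_two_div_lt_quarter {x : ℝ} (hx : 0 < x) :
    besselI 2 x / (x * besselI 1 x) < 1 / 4 := by
  have hlt := two_mul_succ_mul_besselI_succ_lt 1 hx
  have hI := besselI_pos 1 hx
  rw [div_lt_iff₀ (by positivity)]
  norm_num at hlt
  linarith

theorem integral_pow_mul_besselI (n : ℕ) {κ : ℝ} (hκ : κ ≠ 0) :
    ∫ r in (0 : ℝ)..1, r ^ (n + 1) * besselI n (κ * r) = besselI (n + 1) κ / κ := by
  have hF : ∀ r, HasDerivAt (fun r => (κ * r) ^ (n + 1) * besselI (n + 1) (κ * r) / κ ^ (n + 2))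
      (r ^ (n + 1) * besselI n (κ * r)) r := by
    intro r
    refine (((hasDerivAt_pow_mul_besselI_succ n (κ * r)).comp r
      ((hasDerivAt_id r).const_mul κ)).div_const (κ ^ (n + 2))).congr_deriv ?_
    field_simp
    ring
  rw [intervalIntegral.integral_eq_sub_of_hasDerivAt (fun r _ => hF r)
    ((((continuous_pow (n + 1)).mul ((contDiff_besselI n).continuous.comp
      (continuous_const.mul continuous_id)))).intervalIntegrable 0 1)]
  simp [besselI_succ_zero]
  field_simp
  ring

theorem integral_radial_energy_of_ode {B : ℝ} (hB : 0 < B) {g g' g'' f : ℝ → ℝ}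
    (hg : ∀ r, HasDerivAt g (g' r) r) (hg' : ∀ r, HasDerivAt g' (g'' r) r) (hf : Continuous f)
    (hode : ∀ r ∈ Ioo (0 : ℝ) 1,
      r ^ 2 * g'' r + r * g' r - (1 + B * r ^ 2) * g r = -B * r ^ 2 * f r)
    (hg1 : g 1 = 0) :
    ∫ r in (0 : ℝ)..1, (g r ^ 2 + 1 / B * (g' r ^ 2 + g r ^ 2 / r ^ 2)) * r =
      ∫ r in (0 : ℝ)..1, g r * f r * r := by
  have hgc : Continuous g := continuous_iff_continuousAt.2 fun r => (hg r).continuousAt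
  have hg'c : Continuous g' := continuous_iff_continuousAt.2 fun r => (hg' r).continuousAt
  have hΦ : ∀ r, HasDerivAt (fun u => ∫ t in (0 : ℝ)..u, g t * f t * t) (g r * f r * r) r :=
    fun r => (((hgc.mul hf).mul continuous_id).integral_hasStrictDerivAt 0 r).hasDerivAt
  set F : ℝ → ℝ := fun r => 1 / B * (r * g r * g' r) + ∫ t in (0 : ℝ)..r, g t * f t * t
  have hF : ∀ r ∈ Ioo (0 : ℝ) 1,
      HasDerivAt F ((g r ^ 2 + 1 / B * (g' r ^ 2 + g r ^ 2 / r ^ 2)) * r) r := by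
    intro r hr
    refine ((((hasDerivAt_id r).mul (hg r)).mul (hg' r)).const_mul (1 / B) |>.add
      (hΦ r)).congr_deriv ?_
    have hr0 : r ≠ 0 := hr.1.ne'
    simp only [Pi.mul_apply, id]
    field_simp
    linear_combination (g r) * hode r hr
  have hFc : Continuous F := (continuous_const.mul ((continuous_id.mul hgc).mul hg'c)).add
    (continuous_iff_continuousAt.2 fun r => (hΦ r).continuousAt)
  rw [intervalIntegral.integral_eq_sub_of_hasDerivAt_of_le zero_le_one hFc.continuousOn hF ?_]
  · simp [F, hg1]
  · refine intervalIntegral.intervalIntegrable_deriv_of_nonneg hFc.continuousOn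
      (by simpa using hF) ?_
    intro r hr
    simp only [zero_le_one, min_eq_left, max_eq_right] at hr
    have := hr.1.le
    positivity

noncomputable def besselProfile (κ r : ℝ) : ℝ := r - besselI 1 (κ * r) / besselI 1 κ

section BesselProfile

variable {κ : ℝ}

theorem hasDerivAt_besselProfile (κ r : ℝ) :
    HasDerivAt (besselProfile κ) (1 - κ * deriv (besselI 1) (κ * r) / besselI 1 κ) r := by
  refine ((hasDerivAt_id r).sub ((((differentiable_besselI 1) (κ * r)).hasDerivAt.comp r
    ((hasDerivAt_id r).const_mul κ)).div_const _)).congr_deriv ?_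
  simp [mul_comm]

theorem hasDerivAt_deriv_besselProfile (κ r : ℝ) :
    HasDerivAt (fun r => 1 - κ * deriv (besselI 1) (κ * r) / besselI 1 κ)
      (-(κ ^ 2 * deriv (deriv (besselI 1)) (κ * r) / besselI 1 κ)) r := by
  refine ((((((differentiable_deriv_besselI 1) (κ * r)).hasDerivAt.comp r
    ((hasDerivAt_id r).const_mul κ)).const_mul κ).div_const _).const_sub 1).congr_deriv ?_
  simp only [mul_one]
  ring

theorem besselProfile_ode (κ r : ℝ) :
    r ^ 2 * -(κ ^ 2 * deriv (deriv (besselI 1)) (κ * r) / besselI 1 κ) +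
      r * (1 - κ * deriv (besselI 1) (κ * r) / besselI 1 κ) -
      (1 + κ ^ 2 * r ^ 2) * besselProfile κ r = -κ ^ 2 * r ^ 2 * r := by
  unfold besselProfile
  linear_combination (-(besselI 1 κ)⁻¹) * besselI_ode 1 (κ * r)

theorem besselProfile_zero (κ : ℝ) : besselProfile κ 0 = 0 := by
  simp [besselProfile, show besselI 1 0 = 0 from besselI_succ_zero 0]

theorem besselProfile_one (hκ : 0 < κ) : besselProfile κ 1 = 0 := by
  simp [besselProfile, (besselI_pos 1 hκ).ne']

theorem contDiff_besselProfile (κ : ℝ) : ContDiff ℝ 1 (besselProfile κ) :=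
  contDiff_id.sub (((contDiff_besselI 1).comp (contDiff_const.mul contDiff_id)).div_const _)

theorem integral_besselProfile_mul_sq (hκ : κ ≠ 0) :
    ∫ r in (0 : ℝ)..1, besselProfile κ r * r ^ 2 =
      1 / 4 - besselI 2 κ / (κ * besselI 1 κ) := by
  have hI : ∫ r in (0 : ℝ)..1, r ^ 2 * besselI 1 (κ * r) = besselI 2 κ / κ :=
    integral_pow_mul_besselI 1 hκ
  have hcont : Continuous fun r => r ^ 2 * besselI 1 (κ * r) :=
    (continuous_pow 2).mul ((contDiff_besselI 1).continuous.comp (continuous_const_mul κ))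
  have hpoint : ∀ r, besselProfile κ r * r ^ 2 =
      r ^ 3 - r ^ 2 * besselI 1 (κ * r) / besselI 1 κ := fun r => by
    rw [besselProfile]; ring
  simp only [hpoint]
  rw [intervalIntegral.integral_sub ((continuous_pow 3).intervalIntegrable 0 1)
    ((hcont.div_const _).intervalIntegrable 0 1), intervalIntegral.integral_div, hI,
    integral_pow]
  field_simp
  ring

theorem integral_besselProfile_energy (hκ : 0 < κ) :
    ∫ r in (0 : ℝ)..1, (besselProfile κ r ^ 2 + 1 / κ ^ 2 *
      (deriv (besselProfile κ) r ^ 2 + besselProfile κ r ^ 2 / r ^ 2)) * r =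
      1 / 4 - besselI 2 κ / (κ * besselI 1 κ) := by
  rw [← integral_besselProfile_mul_sq hκ.ne']
  simp only [fun r => (hasDerivAt_besselProfile κ r).deriv]
  convert integral_radial_energy_of_ode (pow_pos hκ 2) (hasDerivAt_besselProfile κ)
    (hasDerivAt_deriv_besselProfile κ) continuous_id (fun r _ => besselProfile_ode κ r)
    (besselProfile_one hκ) using 3 with r
  simp only [id]
  ring

end BesselProfile

section Variational

variable {B : ℝ} {h : ℝ → ℝ}

theorem energyR1_nonneg (hB : 0 ≤ B) (hh : ∀ r ∈ Icc (0 : ℝ) 1, 0 ≤ h r) (ψ ζ : ℝ → ℝ) :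
    0 ≤ energyR1 B h ψ ζ := by
  unfold energyR1
  have hψ : 0 ≤ ∫ r in (0 : ℝ)..1, h r * (deriv ψ r ^ 2 + ψ r ^ 2 / r ^ 2) * r :=
    intervalIntegral.integral_nonneg zero_le_one fun r hr => by
      have := hh r hr; have := hr.1; positivity
  have hζ : 0 ≤ ∫ r in (0 : ℝ)..1,
      (ζ r ^ 2 + 1 / B * (deriv ζ r ^ 2 + ζ r ^ 2 / r ^ 2)) * r :=
    intervalIntegral.integral_nonneg zero_le_one fun r hr => by
      have := hr.1; positivity
  positivity

theorem OmegaR1_nonneg (hB : 0 ≤ B) (hh : ∀ r ∈ Icc (0 : ℝ) 1, 0 ≤ h r) : 0 ≤ OmegaR1 B h :=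
  Real.sInf_nonneg <| by
    rintro _ ⟨ψ, ζ, -, -, -, -, -, -, rfl⟩
    exact energyR1_nonneg hB hh ψ ζ

theorem OmegaR1_le_energyR1 (hB : 0 ≤ B) (hh : ∀ r ∈ Icc (0 : ℝ) 1, 0 ≤ h r) {ψ ζ : ℝ → ℝ}
    (hψ : ContDiff ℝ 1 ψ) (hζ : ContDiff ℝ 1 ζ) (hψ0 : ψ 0 = 0) (hζ0 : ζ 0 = 0) (hζ1 : ζ 1 = 0)
    (hψζ : ∫ r in (0 : ℝ)..1, ψ r * ζ r * r = 1) : OmegaR1 B h ≤ energyR1 B h ψ ζ := by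
  refine csInf_le ⟨0, ?_⟩ ⟨ψ, ζ, hψ, hζ, hψ0, hζ0, hζ1, hψζ, rfl⟩
  rintro _ ⟨ψ, ζ, -, -, -, -, -, -, rfl⟩
  exact energyR1_nonneg hB hh ψ ζ

theorem energyR1_const_mul_id (B : ℝ) (h : ℝ → ℝ) (a s : ℝ) (ζ : ℝ → ℝ) :
    energyR1 B h (fun r => a * r) (fun r => s * ζ r) =
      a ^ 2 * (∫ r in (0 : ℝ)..1, h r * r) + s ^ 2 / 2 * ∫ r in (0 : ℝ)..1,
        (ζ r ^ 2 + 1 / B * (deriv ζ r ^ 2 + ζ r ^ 2 / r ^ 2)) * r := by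
  have hψ : ∀ r, h r * (deriv (fun r => a * r) r ^ 2 + (a * r) ^ 2 / r ^ 2) * r =
      2 * a ^ 2 * (h r * r) := fun r => by
    rw [deriv_const_mul_field, deriv_id'']
    rcases eq_or_ne r 0 with rfl | hr
    · simp
    · field_simp; ring
  have hζ : ∀ r, ((s * ζ r) ^ 2 + 1 / B * ((s * deriv ζ r) ^ 2 + (s * ζ r) ^ 2 / r ^ 2)) * r =
      s ^ 2 * ((ζ r ^ 2 + 1 / B * (deriv ζ r ^ 2 + ζ r ^ 2 / r ^ 2)) * r) := fun r => by ring
  simp only [energyR1, hψ, deriv_const_mul_field, hζ, intervalIntegral.integral_const_mul]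
  ring

end Variational

theorem OmegaR1_le_besselProfile {κ : ℝ} (hκ : 0 < κ) {h : ℝ → ℝ}
    (hh : ∀ r ∈ Icc (0 : ℝ) 1, 0 ≤ h r) {a : ℝ} (ha : a ≠ 0) :
    OmegaR1 (κ ^ 2) h ≤ a ^ 2 * (∫ r in (0 : ℝ)..1, h r * r) +
      1 / (2 * a ^ 2 * (1 / 4 - besselI 2 κ / (κ * besselI 1 κ))) := by
  have hD := (sub_pos.2 (besselI_two_div_lt_quarter hκ)).ne'
  have hmass := integral_besselProfile_mul_sq hκ.ne'
  have henergy := integral_besselProfile_energy hκ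
  generalize 1 / 4 - besselI 2 κ / (κ * besselI 1 κ) = D at hD hmass henergy ⊢
  have hψζ : ∫ r in (0 : ℝ)..1, a * r * ((a * D)⁻¹ * besselProfile κ r) * r = 1 := by
    simp only [show ∀ r, a * r * ((a * D)⁻¹ * besselProfile κ r) * r =
        a * (a * D)⁻¹ * (besselProfile κ r * r ^ 2) from fun r => by ring,
      intervalIntegral.integral_const_mul, hmass]
    field_simp
  calc OmegaR1 (κ ^ 2) h
      ≤ energyR1 (κ ^ 2) h (fun r => a * r) (fun r => (a * D)⁻¹ * besselProfile κ r) :=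
        OmegaR1_le_energyR1 (sq_nonneg κ) hh (contDiff_const.mul contDiff_id)
          (contDiff_const.mul (contDiff_besselProfile κ)) (mul_zero a)
          (by simp [besselProfile_zero]) (by simp [besselProfile_one hκ]) hψζ
    _ = _ := by
      rw [energyR1_const_mul_id, henergy]
      field_simp

theorem isoperimetric_radial_m_one (V B : ℝ) (hV : 0 < V) (hB : 0 < B)
    (κ : ℝ) (hκ : κ = Real.sqrt B)
    (lam1 : ℝ)
    (hlam : lam1 = (4 * V / Real.pi) * (1 - 4 * besselI 2 κ / (κ * besselI 1 κ))⁻¹) :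
    ∀ h : ℝ → ℝ, MemMV V h → (OmegaR1 B h) ^ 2 ≤ lam1 := by
  rintro h ⟨-, hh, hmass⟩
  have hκ0 : 0 < κ := hκ ▸ Real.sqrt_pos.2 hB
  obtain rfl : B = κ ^ 2 := by rw [hκ, Real.sq_sqrt hB.le]
  have hD := sub_pos.2 (besselI_two_div_lt_quarter hκ0)
  have hbound := fun a (ha : a ≠ 0) => OmegaR1_le_besselProfile hκ0 hh ha
  rw [show 1 - 4 * besselI 2 κ / (κ * besselI 1 κ) =
    4 * (1 / 4 - besselI 2 κ / (κ * besselI 1 κ)) by ring] at hlam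
  generalize 1 / 4 - besselI 2 κ / (κ * besselI 1 κ) = D at hD hbound hlam
  -- `a ^ 2 = t` balances the two terms of the bound
  set t := Real.sqrt (Real.pi / (V * D))
  have ht : 0 < t := Real.sqrt_pos.2 (by positivity)
  have htD : t ^ 2 * (V * D) = Real.pi := by
    rw [Real.sq_sqrt (by positivity), div_mul_cancel₀ _ (by positivity)]
  have hle := hbound _ (Real.sqrt_pos.2 ht).ne'
  rw [Real.sq_sqrt ht.le, hmass] at hle
  have hbal : t * (V / (2 * Real.pi)) + 1 / (2 * t * D) = t * V / Real.pi := by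
    field_simp
    linear_combination -htD
  calc OmegaR1 (κ ^ 2) h ^ 2 ≤ (t * V / Real.pi) ^ 2 :=
        pow_le_pow_left₀ (OmegaR1_nonneg (sq_nonneg κ) hh) (hle.trans_eq hbal) 2
    _ = lam1 := by
      rw [hlam]
      field_simp
      linear_combination htD
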